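/- Let g ∈ ℂ[x] and let n ≥ 1 be an integer. Suppose that g(x^n), as an element of ℂ(x), can be written as the ratio p(x)/q(x) of two polynomials p, q ∈ ℂ[x], q ≠ 0, each with at most B terms. Then g itself can be written as the ratio of two polynomials in ℂ[x], each with at most B terms (with nonzero denominator). -/

import Mathlib

/-!
If `q * g(x^n) = p`, keep in `q` and `p` only the exponents divisible by `n` and divide them
by `n` (`Polynomial.contract`). This commutes with multiplication by `g(x^n)` and cannot
increase the number of terms. To keep the denominator nonzero, first multiply `p` and `q` by
`x^((n - 1) m)`, where `x^m` is a term of `q`: it moves that term to the exponent `n m`.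
-/

open Polynomial Finset

namespace Polynomial

section Semiring

variable {R : Type*} [Semiring R]

theorem support_mul_X_pow (p : R[X]) (s : ℕ) :
    (p * X ^ s).support = p.support.map (addRightEmbedding s) := by
  ext k
  simp only [mem_support_iff, coeff_mul_X_pow', mem_map, addRightEmbedding_apply]
  constructor
  · intro h
    split_ifs at h
    · exact ⟨k - s, h, by omega⟩
    · exact absurd rfl h
  · rintro ⟨a, ha, rfl⟩
    simpa using ha

theorem card_support_mul_X_pow (p : R[X]) (s : ℕ) :
    #(p * X ^ s).support = #p.support := by
  rw [support_mul_X_pow, card_map]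

end Semiring

variable {R : Type*} [CommSemiring R]

theorem card_support_contract_le {n : ℕ} (hn : n ≠ 0) (f : R[X]) :
    #(contract n f).support ≤ #f.support :=
  card_le_card_of_injOn (· * n)
    (fun k hk => by simpa only [coe_mem, mem_coe, mem_support_iff, coeff_contract hn] using hk)
    (fun _ _ _ _ h => Nat.eq_of_mul_eq_mul_right (Nat.pos_of_ne_zero hn) h)

theorem exists_mul_eq_of_mul_expand_eq {n : ℕ} (hn : n ≠ 0) {g p q : R[X]} (hq : q ≠ 0)
    (h : q * expand R n g = p) :
    ∃ p' q' : R[X], q' ≠ 0 ∧ #p'.support ≤ #p.support ∧ #q'.support ≤ #q.support ∧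
      q' * g = p' := by
  obtain ⟨m, hm⟩ := support_nonempty.mpr hq
  obtain ⟨k, rfl⟩ := Nat.exists_eq_add_one_of_ne_zero hn
  refine ⟨contract (k + 1) (p * X ^ (m * k)), contract (k + 1) (q * X ^ (m * k)),
    fun h0 => mem_support_iff.mp hm ?_,
    (card_support_contract_le hn _).trans (card_support_mul_X_pow p _).le,
    (card_support_contract_le hn _).trans (card_support_mul_X_pow q _).le, ?_⟩
  · have := congrArg (coeff · m) h0
    rwa [coeff_contract hn, mul_add_one, add_comm, coeff_mul_X_pow, coeff_zero] at this
  · rw [← contract_mul_expand hn, mul_right_comm, h]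

end Polynomial

theorem IsFractionRing.algebraMap_eq_div_iff {A K : Type*} [CommRing A] [Field K]
    [Algebra A K] [IsFractionRing A K] {a b c : A} (hc : c ≠ 0) :
    algebraMap A K a = algebraMap A K b / algebraMap A K c ↔ c * a = b := by
  rw [eq_div_iff ((map_ne_zero_iff _ (IsFractionRing.injective A K)).mpr hc), ← map_mul,
    (IsFractionRing.injective A K).eq_iff, mul_comm]

/-- **Lemma 2.7.** Let `g ∈ ℂ[x]` and `n ≥ 1`. If `g(x^n)`, as an element of `ℂ(x)`,
can be written as a ratio `p/q` of polynomials each with at most `B` terms (`q ≠ 0`),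
then `g` itself can be written as such a ratio of polynomials with at most `B` terms. -/
theorem fewnomials_ratio_n_to_one (g : Polynomial ℂ) (n : ℕ) (hn : 1 ≤ n) (B : ℕ)
    (p q : Polynomial ℂ) (hq : q ≠ 0)
    (hp : p.support.card ≤ B) (hq' : q.support.card ≤ B)
    (h : algebraMap (Polynomial ℂ) (RatFunc ℂ) (g.comp (Polynomial.X ^ n)) =
      algebraMap (Polynomial ℂ) (RatFunc ℂ) p / algebraMap (Polynomial ℂ) (RatFunc ℂ) q) :
    ∃ p' q' : Polynomial ℂ, q' ≠ 0 ∧ p'.support.card ≤ B ∧ q'.support.card ≤ B ∧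
      algebraMap (Polynomial ℂ) (RatFunc ℂ) g =
        algebraMap (Polynomial ℂ) (RatFunc ℂ) p' / algebraMap (Polynomial ℂ) (RatFunc ℂ) q' := by
  rw [← expand_eq_comp_X_pow, IsFractionRing.algebraMap_eq_div_iff hq] at h
  obtain ⟨p', q', hq'0, hp'p, hq'q, hgq⟩ :=
    exists_mul_eq_of_mul_expand_eq (Nat.one_le_iff_ne_zero.mp hn) hq h
  exact ⟨p', q', hq'0, hp'p.trans hp, hq'q.trans hq',
    (IsFractionRing.algebraMap_eq_div_iff hq'0).mpr hgq⟩
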